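/- Suppose O = {J_n} consists of a single open-shop job with processing time q_n > p_max, and let {F1, F2} be a bipartition of F with both parts nonempty; let p_{i1} be the largest processing time in F1 and p_{i2} the largest in F2. Consider feasible schedules in which J_n is processed in machine order ⟨M3, M2, M1⟩ (C_n^3 ≤ S_n^2 and C_n^2 ≤ S_n^1), every job of F1 is completed on M2 by time S_n^2, and every job of F2 starts on M2 no earlier than C_n^2. Then every such schedule has makespan at least max{p_{i1} + P(F1), q_n} + q_n + max{p_{i2} + P(F2), q_n}, and there exists such a schedule with makespan exactly this value. -/

import Mathlib

/-!
Lower bound: `i1` splits the other jobs of `F1` into those finishing on `M2` before `i1` starts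
there, which together with `i1` occupy `M1` within `[0, S_{i1}^2]`, and the rest, which together
with `i1` occupy `M2` within `[S_{i1}^2, S_n^2]`. Hence `p_{i1} + P(F1) ≤ S_n^2`, and `q_n ≤ S_n^2`
because `J_n` runs on `M3` first. In the same way `F2` on `M2, M3` after `C_n^2` gives
`C_n^2 + p_{i2} + P(F2)` as a lower bound of the makespan, and `J_n` on `M1` gives `C_n^2 + q_n`.

The bound is attained by processing `F1`, `J_n`, `F2` as three blocks, each block sequenced without
idle time and shifted rigidly from machine to machine; `p_j ≤ p_{i1} < q_n` makes the shifts
compatible with the flow-shop order.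
-/

open Finset

noncomputable section

/-- Processing time of a job: `p` on flow-shop jobs, `q` otherwise. -/
def jobTime {J : Type*} [DecidableEq J] (F : Finset J) (p q : J → ℝ) (j : J) : ℝ :=
  if j ∈ F then p j else q j

/-- Feasibility of a schedule given by start times `S j i` of job `j` on machine `i`
(machines `M1, M2, M3` are machines `0, 1, 2`):
all start times are nonnegative, on each machine the open processing intervals of
distinct jobs are pairwise disjoint, for each job the open processing intervals on the
three machines are pairwise disjoint, and each flow-shop job goes through
`M1`, `M2`, `M3` in this order. -/
def Feasible {J : Type*} [DecidableEq J] (F O : Finset J) (p q : J → ℝ)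
    (S : J → Fin 3 → ℝ) : Prop :=
  (∀ j ∈ F ∪ O, ∀ i : Fin 3, 0 ≤ S j i) ∧
  (∀ i : Fin 3, ∀ j ∈ F ∪ O, ∀ k ∈ F ∪ O, j ≠ k →
    S j i + jobTime F p q j ≤ S k i ∨ S k i + jobTime F p q k ≤ S j i) ∧
  (∀ j ∈ F ∪ O, ∀ i i' : Fin 3, i ≠ i' →
    S j i + jobTime F p q j ≤ S j i' ∨ S j i' + jobTime F p q j ≤ S j i) ∧
  (∀ j ∈ F, S j 0 + p j ≤ S j 1 ∧ S j 1 + p j ≤ S j 2)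

/-- Makespan: supremum of all completion times of the jobs of `F ∪ O`. -/
def makespan {J : Type*} [DecidableEq J] (F O : Finset J) (p q : J → ℝ)
    (S : J → Fin 3 → ℝ) : ℝ :=
  sSup {x : ℝ | ∃ j ∈ F ∪ O, ∃ i : Fin 3, x = S j i + jobTime F p q j}

section Intervals

variable {ι G : Type*} {s : Finset ι} {start len : ι → ℝ}

def NonOverlapping (s : Finset ι) (start len : ι → ℝ) : Prop :=
  ∀ j ∈ s, ∀ k ∈ s, j ≠ k → start j + len j ≤ start k ∨ start k + len k ≤ start j

namespace NonOverlapping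

theorem mono {u : Finset ι} (h : NonOverlapping s start len) (hus : u ⊆ s) :
    NonOverlapping u start len :=
  fun j hj k hk hjk => h j (hus hj) k (hus hk) hjk

theorem congr_len {len' : ι → ℝ} (h : NonOverlapping s start len)
    (hlen : ∀ j ∈ s, len j = len' j) : NonOverlapping s start len' := by
  intro j hj k hk hjk
  rw [← hlen j hj, ← hlen k hk]
  exact h j hj k hk hjk

theorem sum_le_sub {a b : ℝ} (h : NonOverlapping s start len) (hlen : ∀ j ∈ s, 0 ≤ len j)
    (hab : a ≤ b) (ha : ∀ j ∈ s, a ≤ start j) (hb : ∀ j ∈ s, start j + len j ≤ b) :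
    ∑ j ∈ s, len j ≤ b - a := by
  have hdisj : (s : Set ι).PairwiseDisjoint fun j => Set.Ioo (start j) (start j + len j) := by
    intro j hj k hk hjk
    rw [Function.onFun, Set.disjoint_left]
    rintro x ⟨hjx, hxj⟩ ⟨hkx, hxk⟩
    rcases h j hj k hk hjk with hjk | hkj <;> linarith
  have hsub : ⋃ j ∈ s, Set.Ioo (start j) (start j + len j) ⊆ Set.Ioo a b :=
    Set.iUnion₂_subset fun j hj => Set.Ioo_subset_Ioo (ha j hj) (hb j hj)
  have hvol := MeasureTheory.measure_mono (μ := MeasureTheory.volume) hsub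
  rw [MeasureTheory.measure_biUnion_finset hdisj fun _ _ => measurableSet_Ioo] at hvol
  simp only [Real.volume_Ioo, add_sub_cancel_left] at hvol
  rwa [← ENNReal.ofReal_sum_of_nonneg hlen, ENNReal.ofReal_le_ofReal_iff (sub_nonneg.2 hab)]
    at hvol

theorem of_blocks {B : G → Finset ι} {grp : ι → G} {t : G → ι → ℝ} {off W : G → ℝ}
    (hgrp : ∀ j ∈ s, j ∈ B (grp j)) (hin : ∀ g, NonOverlapping (B g) (t g) len)
    (ht : ∀ g, ∀ j ∈ B g, 0 ≤ t g j ∧ t g j + len j ≤ W g)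
    (hoff : ∀ g h, g ≠ h → off g + W g ≤ off h ∨ off h + W h ≤ off g) :
    NonOverlapping s (fun j => off (grp j) + t (grp j) j) len := by
  intro j hj k hk hjk
  obtain ⟨hj0, hjW⟩ := ht _ j (hgrp j hj)
  obtain ⟨hk0, hkW⟩ := ht _ k (hgrp k hk)
  by_cases hg : grp j = grp k
  · dsimp only
    rw [hg] at hj0 hjW ⊢
    rcases hin (grp k) j (hg ▸ hgrp j hj) k (hgrp k hk) hjk with h | h
    · exact Or.inl (by linarith)
    · exact Or.inr (by linarith)
  · rcases hoff _ _ hg with h | h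
    · exact Or.inl (by linarith)
    · exact Or.inr (by linarith)

end NonOverlapping

theorem exists_nonOverlapping_sequence [DecidableEq ι] (s : Finset ι)
    (hlen : ∀ j ∈ s, 0 ≤ len j) :
    ∃ t : ι → ℝ, NonOverlapping s t len ∧ ∀ j ∈ s, 0 ≤ t j ∧ t j + len j ≤ ∑ k ∈ s, len k := by
  induction s using Finset.induction_on with
  | empty => exact ⟨0, by simp [NonOverlapping]⟩
  | insert a s ha ih =>
    obtain ⟨t, hdisj, ht⟩ := ih fun j hj => hlen j (mem_insert_of_mem hj)
    have hs : 0 ≤ ∑ k ∈ s, len k := sum_nonneg fun j hj => hlen j (mem_insert_of_mem hj)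
    have hupd : ∀ j ∈ s, Function.update t a (∑ k ∈ s, len k) j = t j :=
      fun j hj => Function.update_of_ne (ne_of_mem_of_not_mem hj ha) _ _
    refine ⟨Function.update t a (∑ k ∈ s, len k), ?_, ?_⟩
    · intro j hj k hk hjk
      rcases mem_insert.1 hj with rfl | hj' <;> rcases mem_insert.1 hk with rfl | hk'
      · exact absurd rfl hjk
      · rw [hupd k hk', Function.update_self]; exact Or.inr (ht k hk').2
      · rw [hupd j hj', Function.update_self]; exact Or.inl (ht j hj').2
      · rw [hupd j hj', hupd k hk']; exact hdisj j hj' k hk' hjk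
    · intro j hj
      rw [sum_insert ha]
      have ha0 := hlen a (mem_insert_self a s)
      rcases mem_insert.1 hj with rfl | hj'
      · rw [Function.update_self]; exact ⟨hs, by linarith⟩
      · rw [hupd j hj']; have := ht j hj'
        constructor <;> linarith

theorem add_sum_le_sub_of_flow {f g : ι → ℝ} {a b : ℝ} {i : ι} [DecidableEq ι] (hi : i ∈ s)
    (hlen : ∀ j ∈ s, 0 ≤ len j) (hf : NonOverlapping s f len) (hg : NonOverlapping s g len)
    (ha : ∀ j ∈ s, a ≤ f j) (hfg : ∀ j ∈ s, f j + len j ≤ g j) (hb : ∀ j ∈ s, g j + len j ≤ b) :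
    len i + ∑ j ∈ s, len j ≤ b - a := by
  -- The jobs finishing on `g` before `i` starts there are, together with `i`, processed by `f`
  -- within `[a, g i]`; the others are, together with `i`, processed by `g` within `[g i, b]`.
  have hiE : i ∉ {j ∈ s | g j < g i} := by simp
  have hE : ∀ j ∈ {j ∈ s | g j < g i}, g j + len j ≤ g i := by
    intro j hj
    obtain ⟨hjs, hji⟩ := mem_filter.1 hj
    rcases hg j hjs i hi (ne_of_lt hji |>.imp (congrArg g)) with h | h
    · exact h
    · linarith [hlen i hi]
  have hsub : insert i {j ∈ s | g j < g i} ⊆ s := insert_subset hi (filter_subset _ _)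
  have hbefore : ∑ j ∈ insert i {j ∈ s | g j < g i}, len j ≤ g i - a := by
    refine (hf.mono hsub).sum_le_sub (fun j hj => hlen j (hsub hj))
      (by linarith [ha i hi, hfg i hi, hlen i hi]) (fun j hj => ha j (hsub hj)) ?_
    intro j hj
    rcases mem_insert.1 hj with rfl | hjE
    · exact hfg j hi
    · linarith [hfg j (hsub hj), hE j hjE, hlen j (hsub hj)]
  have hafter : ∑ j ∈ s with ¬ g j < g i, len j ≤ b - g i := by
    refine (hg.mono (filter_subset _ _)).sum_le_sub (fun j hj => hlen j (mem_filter.1 hj).1)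
      (by linarith [hb i hi, hlen i hi]) (fun j hj => not_lt.1 (mem_filter.1 hj).2)
      (fun j hj => hb j (mem_filter.1 hj).1)
  rw [sum_insert hiE] at hbefore
  linarith [sum_filter_add_sum_filter_not s (fun j => g j < g i) len]

end Intervals

section Schedule

variable {J : Type*} [DecidableEq J] {F O : Finset J} {p q : J → ℝ} {S : J → Fin 3 → ℝ}

theorem jobTime_of_mem {j : J} (hj : j ∈ F) : jobTime F p q j = p j := if_pos hj

theorem jobTime_of_notMem {j : J} (hj : j ∉ F) : jobTime F p q j = q j := if_neg hj

theorem bddAbove_completionTimes :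
    BddAbove {x : ℝ | ∃ j ∈ F ∪ O, ∃ i : Fin 3, x = S j i + jobTime F p q j} := by
  refine Set.Finite.bddAbove <| Set.Finite.subset
    (((F ∪ O) ×ˢ (univ : Finset (Fin 3))).finite_toSet.image
      fun ji => S ji.1 ji.2 + jobTime F p q ji.1) ?_
  rintro _ ⟨j, hj, i, rfl⟩
  exact ⟨(j, i), by simpa using hj, rfl⟩

theorem le_makespan {j : J} (hj : j ∈ F ∪ O) (i : Fin 3) :
    S j i + jobTime F p q j ≤ makespan F O p q S :=
  le_csSup bddAbove_completionTimes ⟨j, hj, i, rfl⟩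

theorem makespan_le {m : ℝ} (hne : (F ∪ O).Nonempty)
    (h : ∀ j ∈ F ∪ O, ∀ i : Fin 3, S j i + jobTime F p q j ≤ m) : makespan F O p q S ≤ m := by
  obtain ⟨j, hj⟩ := hne
  refine csSup_le ⟨_, j, hj, 0, rfl⟩ ?_
  rintro _ ⟨k, hk, i, rfl⟩
  exact h k hk i

theorem separated_of_chain {v : Fin 3 → ℝ} {d : ℝ} (hd : 0 ≤ d)
    (hchain : v 0 + d ≤ v 1 ∧ v 1 + d ≤ v 2 ∨ v 2 + d ≤ v 1 ∧ v 1 + d ≤ v 0) :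
    ∀ i i' : Fin 3, i ≠ i' → v i + d ≤ v i' ∨ v i' + d ≤ v i := by
  intro i i' hii'
  rcases hchain with ⟨h01, h12⟩ | ⟨h21, h10⟩ <;> fin_cases i <;> fin_cases i' <;>
    simp at hii' ⊢ <;> first | (left; linarith) | (right; linarith)

namespace Feasible

theorem nonOverlapping (h : Feasible F O p q S) (i : Fin 3) {X : Finset J} (hX : X ⊆ F) :
    NonOverlapping X (fun j => S j i) p :=
  (NonOverlapping.mono (h.2.1 i) (hX.trans subset_union_left)).congr_len
    fun _ hj => jobTime_of_mem (hX hj)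

theorem add_sum_le_of_forall_le (h : Feasible F O p q S) (hp : ∀ j ∈ F, 0 < p j)
    {X : Finset J} (hX : X ⊆ F) {i : J} (hi : i ∈ X) {b : ℝ} (hb : ∀ j ∈ X, S j 1 + p j ≤ b) :
    p i + ∑ j ∈ X, p j ≤ b := by
  have := add_sum_le_sub_of_flow hi (fun j hj => (hp j (hX hj)).le) (h.nonOverlapping 0 hX)
    (h.nonOverlapping 1 hX) (fun j hj => h.1 j (mem_union_left _ (hX hj)) 0)
    (fun j hj => (h.2.2.2 j (hX hj)).1) hb
  linarith

theorem add_add_sum_le_makespan (h : Feasible F O p q S) (hp : ∀ j ∈ F, 0 < p j)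
    {X : Finset J} (hX : X ⊆ F) {i : J} (hi : i ∈ X) {c : ℝ} (hc : ∀ j ∈ X, c ≤ S j 1) :
    c + p i + ∑ j ∈ X, p j ≤ makespan F O p q S := by
  have := add_sum_le_sub_of_flow hi (fun j hj => (hp j (hX hj)).le) (h.nonOverlapping 1 hX)
    (h.nonOverlapping 2 hX) hc (fun j hj => (h.2.2.2 j (hX hj)).2) fun j hj => by
      simpa only [jobTime_of_mem (hX hj)] using le_makespan (q := q) (mem_union_left O (hX hj)) 2
  linarith

end Feasible

end Schedule

-- Start times of the blocks `F1, {J_n}, F2` (rows) on the machines (columns), where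
-- `a1 = p_{i1}`, `a2 = p_{i2}`, `P1 = P(F1)`, `P2 = P(F2)`.
def splitOffset (a1 a2 q P1 P2 : ℝ) : Fin 3 → Fin 3 → ℝ :=
  ![![0, a1, q + a1],
    ![max (max (a1 + P1) q + q) (P1 + P2), max (a1 + P1) q, 0],
    ![P1, max (a1 + P1) q + q, max (a1 + P1) q + q + a2]]

def splitWidth (q P1 P2 : ℝ) : Fin 3 → ℝ := ![P1, q, P2]

section SplitOffset

variable {a1 a2 q P1 P2 : ℝ}

theorem splitOffset_nonneg (ha1 : 0 ≤ a1) (ha2 : 0 ≤ a2) (hq : 0 ≤ q) (hP1 : 0 ≤ P1)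
    (g i : Fin 3) : 0 ≤ splitOffset a1 a2 q P1 P2 g i := by
  unfold splitOffset
  set A := max (a1 + P1) q
  have hA : a1 + P1 ≤ A := le_max_left _ _
  set Z := max (A + q) (P1 + P2)
  have hZ : A + q ≤ Z := le_max_left _ _
  fin_cases g <;> fin_cases i <;> simp <;> linarith

theorem splitOffset_add_splitWidth_le (ha1 : 0 ≤ a1) (ha2 : 0 ≤ a2) (hq : 0 ≤ q) (hP1 : 0 ≤ P1)
    (hP2 : 0 ≤ P2) (g i : Fin 3) :
    splitOffset a1 a2 q P1 P2 g i + splitWidth q P1 P2 g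
      ≤ max (a1 + P1) q + q + max (a2 + P2) q := by
  unfold splitOffset splitWidth
  set A := max (a1 + P1) q
  set B := max (a2 + P2) q
  have hA : a1 + P1 ≤ A := le_max_left _ _
  have hAq : q ≤ A := le_max_right _ _
  have hB : a2 + P2 ≤ B := le_max_left _ _
  have hBq : q ≤ B := le_max_right _ _
  set Z := max (A + q) (P1 + P2)
  have hZ : Z ≤ A + B := max_le (by linarith) (by linarith)
  fin_cases g <;> fin_cases i <;> simp <;> linarith

theorem splitOffset_separated (ha1 : 0 ≤ a1) (ha2 : 0 ≤ a2) (hq : 0 ≤ q) (hP1 : 0 ≤ P1)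
    (i : Fin 3) {g h : Fin 3} (hgh : g ≠ h) :
    splitOffset a1 a2 q P1 P2 g i + splitWidth q P1 P2 g ≤ splitOffset a1 a2 q P1 P2 h i ∨
      splitOffset a1 a2 q P1 P2 h i + splitWidth q P1 P2 h ≤ splitOffset a1 a2 q P1 P2 g i := by
  unfold splitOffset splitWidth
  set A := max (a1 + P1) q
  have hA : a1 + P1 ≤ A := le_max_left _ _
  have hAq : q ≤ A := le_max_right _ _
  set Z := max (A + q) (P1 + P2)
  have hZA : A + q ≤ Z := le_max_left _ _
  have hZP : P1 + P2 ≤ Z := le_max_right _ _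
  fin_cases i <;> fin_cases g <;> fin_cases h <;> simp at hgh ⊢ <;>
    first | (left; linarith) | (right; linarith)

theorem splitOffset_flow_left {d : ℝ} (hd : d ≤ a1) (hdq : d ≤ q) :
    splitOffset a1 a2 q P1 P2 0 0 + d ≤ splitOffset a1 a2 q P1 P2 0 1 ∧
      splitOffset a1 a2 q P1 P2 0 1 + d ≤ splitOffset a1 a2 q P1 P2 0 2 := by
  simp only [splitOffset]
  constructor <;> simp <;> linarith

theorem splitOffset_flow_right {d : ℝ} (ha1 : 0 ≤ a1) (hd : d ≤ a2) (hdq : d ≤ q) :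
    splitOffset a1 a2 q P1 P2 2 0 + d ≤ splitOffset a1 a2 q P1 P2 2 1 ∧
      splitOffset a1 a2 q P1 P2 2 1 + d ≤ splitOffset a1 a2 q P1 P2 2 2 := by
  simp only [splitOffset]
  have := le_max_left (a1 + P1) q
  constructor <;> simp <;> linarith

theorem splitOffset_one_chain :
    splitOffset a1 a2 q P1 P2 1 2 + q ≤ splitOffset a1 a2 q P1 P2 1 1 ∧
      splitOffset a1 a2 q P1 P2 1 1 + q ≤ splitOffset a1 a2 q P1 P2 1 0 := by
  simp [splitOffset]

end SplitOffset

section BlockSchedule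

variable {J G : Type*} [DecidableEq J] {F O : Finset J} {p q : J → ℝ} {B : G → Finset J}
  {grp : J → G} {t : G → J → ℝ} {off : G → Fin 3 → ℝ} {W : G → ℝ}

def blockSchedule (grp : J → G) (off : G → Fin 3 → ℝ) (t : G → J → ℝ) (j : J) (i : Fin 3) : ℝ :=
  off (grp j) i + t (grp j) j

theorem Feasible.of_blocks (hp : ∀ j ∈ F, 0 ≤ p j) (hgrp : ∀ j ∈ F ∪ O, j ∈ B (grp j))
    (hin : ∀ g, NonOverlapping (B g) (t g) (jobTime F p q))
    (ht : ∀ g, ∀ j ∈ B g, 0 ≤ t g j ∧ t g j + jobTime F p q j ≤ W g)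
    (hoff : ∀ g i, 0 ≤ off g i)
    (hsep : ∀ i g h, g ≠ h → off g i + W g ≤ off h i ∨ off h i + W h ≤ off g i)
    (hflow : ∀ j ∈ F,
      off (grp j) 0 + p j ≤ off (grp j) 1 ∧ off (grp j) 1 + p j ≤ off (grp j) 2)
    (hopen : ∀ j ∈ O, j ∉ F → ∀ i i', i ≠ i' →
      off (grp j) i + q j ≤ off (grp j) i' ∨ off (grp j) i' + q j ≤ off (grp j) i) :
    Feasible F O p q (blockSchedule grp off t) := by
  unfold blockSchedule
  have hflow' : ∀ j ∈ F, off (grp j) 0 + t (grp j) j + p j ≤ off (grp j) 1 + t (grp j) j ∧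
      off (grp j) 1 + t (grp j) j + p j ≤ off (grp j) 2 + t (grp j) j := fun j hj => by
    obtain ⟨h01, h12⟩ := hflow j hj
    constructor <;> linarith
  refine ⟨fun j hj i => ?_, fun i => NonOverlapping.of_blocks hgrp hin ht (hsep i),
    fun j hj i i' hii' => ?_, hflow'⟩
  · linarith [(ht _ j (hgrp j hj)).1, hoff (grp j) i]
  · by_cases hjF : j ∈ F
    · rw [jobTime_of_mem hjF]
      exact separated_of_chain (v := fun i => off (grp j) i + t (grp j) j) (hp j hjF)
        (Or.inl (hflow' j hjF)) i i' hii'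
    · rw [jobTime_of_notMem hjF]
      rcases hopen j ((mem_union.1 hj).resolve_left hjF) hjF i i' hii' with h | h
      · exact Or.inl (by linarith)
      · exact Or.inr (by linarith)

theorem makespan_le_of_blocks {m : ℝ} (hne : (F ∪ O).Nonempty)
    (hgrp : ∀ j ∈ F ∪ O, j ∈ B (grp j))
    (ht : ∀ g, ∀ j ∈ B g, 0 ≤ t g j ∧ t g j + jobTime F p q j ≤ W g)
    (hend : ∀ g i, off g i + W g ≤ m) :
    makespan F O p q (blockSchedule grp off t) ≤ m :=
  makespan_le hne fun j hj i => by
    unfold blockSchedule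
    linarith [(ht _ j (hgrp j hj)).2, hend (grp j) i]

end BlockSchedule

section SplitBlocks

variable {J : Type*} [DecidableEq J] {F F1 F2 : Finset J} {jn j : J} {p q : J → ℝ}

def splitBlocks (F1 F2 : Finset J) (jn : J) : Fin 3 → Finset J := ![F1, {jn}, F2]

def splitBlock (F1 F2 : Finset J) (j : J) : Fin 3 :=
  if j ∈ F1 then 0 else if j ∈ F2 then 2 else 1

theorem splitBlock_of_mem_left (hj : j ∈ F1) : splitBlock F1 F2 j = 0 := if_pos hj

theorem splitBlock_of_mem_right (hdisj : Disjoint F1 F2) (hj : j ∈ F2) :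
    splitBlock F1 F2 j = 2 := by
  simp [splitBlock, hj, disjoint_right.1 hdisj hj]

theorem splitBlock_of_notMem (h1 : j ∉ F1) (h2 : j ∉ F2) : splitBlock F1 F2 j = 1 := by
  simp [splitBlock, h1, h2]

theorem mem_splitBlocks_splitBlock (hunion : F1 ∪ F2 = F) (hj : j ∈ F ∪ {jn}) :
    j ∈ splitBlocks F1 F2 jn (splitBlock F1 F2 j) := by
  by_cases h1 : j ∈ F1
  · simp [splitBlocks, splitBlock, h1]
  by_cases h2 : j ∈ F2
  · simp [splitBlocks, splitBlock, h1, h2]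
  have hjn : j = jn := by simpa [← hunion, h1, h2] using hj
  rw [hjn] at h1 h2 ⊢
  simp [splitBlocks, splitBlock, h1, h2]

theorem sum_jobTime_splitBlocks (hjn : jn ∉ F) (hF1 : F1 ⊆ F) (hF2 : F2 ⊆ F) (g : Fin 3) :
    ∑ k ∈ splitBlocks F1 F2 jn g, jobTime F p q k
      = splitWidth (q jn) (∑ k ∈ F1, p k) (∑ k ∈ F2, p k) g := by
  fin_cases g
  · exact sum_congr rfl fun k hk => jobTime_of_mem (hF1 hk)
  · simp [splitBlocks, splitWidth, jobTime_of_notMem hjn]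
  · exact sum_congr rfl fun k hk => jobTime_of_mem (hF2 hk)

theorem exists_splitBlocks_sequence (hjn : jn ∉ F) (hp : ∀ j ∈ F, 0 ≤ p j) (hq : 0 ≤ q jn)
    (hF1 : F1 ⊆ F) (hF2 : F2 ⊆ F) :
    ∃ t : Fin 3 → J → ℝ, (∀ g, NonOverlapping (splitBlocks F1 F2 jn g) (t g) (jobTime F p q)) ∧
      ∀ g, ∀ j ∈ splitBlocks F1 F2 jn g, 0 ≤ t g j ∧
        t g j + jobTime F p q j ≤ splitWidth (q jn) (∑ k ∈ F1, p k) (∑ k ∈ F2, p k) g := by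
  have hlen : ∀ g, ∀ j ∈ splitBlocks F1 F2 jn g, 0 ≤ jobTime F p q j := by
    intro g j hj
    fin_cases g <;> simp [splitBlocks] at hj
    · rw [jobTime_of_mem (hF1 hj)]; exact hp j (hF1 hj)
    · rw [hj, jobTime_of_notMem hjn]; exact hq
    · rw [jobTime_of_mem (hF2 hj)]; exact hp j (hF2 hj)
  choose t ht_in ht using fun g => exists_nonOverlapping_sequence _ (hlen g)
  exact ⟨t, ht_in, fun g => sum_jobTime_splitBlocks hjn hF1 hF2 g ▸ ht g⟩

theorem blockSchedule_splitBlock_order {i1 i2 : J} {t : Fin 3 → J → ℝ} (hjn : jn ∉ F) (hF1 : F1 ⊆ F)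
    (hF2 : F2 ⊆ F) (hdisj : Disjoint F1 F2)
    (ht : ∀ g, ∀ j ∈ splitBlocks F1 F2 jn g, 0 ≤ t g j ∧
      t g j + jobTime F p q j ≤ splitWidth (q jn) (∑ k ∈ F1, p k) (∑ k ∈ F2, p k) g) :
    let S := blockSchedule (splitBlock F1 F2)
      (splitOffset (p i1) (p i2) (q jn) (∑ k ∈ F1, p k) (∑ k ∈ F2, p k)) t
    S jn 2 + q jn ≤ S jn 1 ∧ S jn 1 + q jn ≤ S jn 0 ∧
      (∀ j ∈ F1, S j 1 + p j ≤ S jn 1) ∧ (∀ j ∈ F2, S jn 1 + q jn ≤ S j 1) := by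
  have hjn1 : jn ∉ F1 := fun h => hjn (hF1 h)
  have hjn2 : jn ∉ F2 := fun h => hjn (hF2 h)
  have hchain := splitOffset_one_chain (a1 := p i1) (a2 := p i2) (q := q jn)
    (P1 := ∑ k ∈ F1, p k) (P2 := ∑ k ∈ F2, p k)
  have h1 := ht 1 jn (by simp [splitBlocks])
  simp [splitWidth, jobTime_of_notMem hjn] at h1
  simp only [blockSchedule, splitBlock_of_notMem hjn1 hjn2]
  refine ⟨by linarith [hchain.1], by linarith [hchain.2], fun j hj => ?_, fun j hj => ?_⟩
  · have h0 := ht 0 j (by simp [splitBlocks, hj])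
    simp [splitBlock_of_mem_left hj, splitOffset, splitWidth, jobTime_of_mem (hF1 hj)] at h0 ⊢
    linarith [le_max_left (p i1 + ∑ k ∈ F1, p k) (q jn)]
  · have h2 := ht 2 j (by simp [splitBlocks, hj])
    simp [splitBlock_of_mem_right hdisj hj, splitOffset, splitWidth] at h2 ⊢
    linarith

end SplitBlocks

section SingleOpenJob

variable {J : Type*} [DecidableEq J] {F F1 F2 : Finset J} {jn i1 i2 : J} {p q : J → ℝ}

theorem le_makespan_of_split (hjn : jn ∉ F) (hp : ∀ j ∈ F, 0 < p j) (hF1 : F1 ⊆ F)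
    (hF2 : F2 ⊆ F) (hi1 : i1 ∈ F1) (hi2 : i2 ∈ F2) {S : J → Fin 3 → ℝ}
    (hS : Feasible F {jn} p q S) (h32 : S jn 2 + q jn ≤ S jn 1) (h21 : S jn 1 + q jn ≤ S jn 0)
    (hbefore : ∀ j ∈ F1, S j 1 + p j ≤ S jn 1) (hafter : ∀ j ∈ F2, S jn 1 + q jn ≤ S j 1) :
    max (p i1 + ∑ j ∈ F1, p j) (q jn) + q jn + max (p i2 + ∑ j ∈ F2, p j) (q jn)
      ≤ makespan F {jn} p q S := by
  have hA : max (p i1 + ∑ j ∈ F1, p j) (q jn) ≤ S jn 1 :=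
    max_le (hS.add_sum_le_of_forall_le hp hF1 hi1 hbefore)
      (by linarith [hS.1 jn (mem_union_right F (mem_singleton_self jn)) 2])
  have hF2end := hS.add_add_sum_le_makespan hp hF2 hi2 hafter
  have hjnend : S jn 0 + q jn ≤ makespan F {jn} p q S := by
    simpa only [jobTime_of_notMem hjn] using
      le_makespan (p := p) (mem_union_right F (mem_singleton_self jn)) 0
  have hB : max (p i2 + ∑ j ∈ F2, p j) (q jn) ≤ makespan F {jn} p q S - S jn 1 - q jn :=
    max_le (by linarith) (by linarith)
  linarith

theorem exists_split_schedule (hjn : jn ∉ F) (hp : ∀ j ∈ F, 0 < p j)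
    (hpq : ∀ j ∈ F, p j < q jn) (hunion : F1 ∪ F2 = F) (hdisj : Disjoint F1 F2)
    (hi1 : i1 ∈ F1) (hi1max : ∀ j ∈ F1, p j ≤ p i1)
    (hi2 : i2 ∈ F2) (hi2max : ∀ j ∈ F2, p j ≤ p i2) :
    ∃ S : J → Fin 3 → ℝ, Feasible F {jn} p q S ∧
      S jn 2 + q jn ≤ S jn 1 ∧ S jn 1 + q jn ≤ S jn 0 ∧
      (∀ j ∈ F1, S j 1 + p j ≤ S jn 1) ∧ (∀ j ∈ F2, S jn 1 + q jn ≤ S j 1) ∧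
      makespan F {jn} p q S ≤
        max (p i1 + ∑ j ∈ F1, p j) (q jn) + q jn + max (p i2 + ∑ j ∈ F2, p j) (q jn) := by
  have hF1 : F1 ⊆ F := hunion ▸ subset_union_left
  have hF2 : F2 ⊆ F := hunion ▸ subset_union_right
  have hjn1 : jn ∉ F1 := fun h => hjn (hF1 h)
  have hjn2 : jn ∉ F2 := fun h => hjn (hF2 h)
  have hp0 : ∀ j ∈ F, 0 ≤ p j := fun j hj => (hp j hj).le
  have hp1 := hp0 i1 (hF1 hi1)
  have hp2 := hp0 i2 (hF2 hi2)
  have hq : 0 ≤ q jn := by linarith [hpq i1 (hF1 hi1)]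
  have hP1 : 0 ≤ ∑ j ∈ F1, p j := sum_nonneg fun j hj => hp0 j (hF1 hj)
  have hP2 : 0 ≤ ∑ j ∈ F2, p j := sum_nonneg fun j hj => hp0 j (hF2 hj)
  obtain ⟨t, ht_in, ht⟩ := exists_splitBlocks_sequence hjn hp0 hq hF1 hF2
  set off := splitOffset (p i1) (p i2) (q jn) (∑ j ∈ F1, p j) (∑ j ∈ F2, p j)
  have hgrp := fun j (hj : j ∈ F ∪ {jn}) => mem_splitBlocks_splitBlock hunion hj
  have hflow : ∀ j ∈ F, off (splitBlock F1 F2 j) 0 + p j ≤ off (splitBlock F1 F2 j) 1 ∧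
      off (splitBlock F1 F2 j) 1 + p j ≤ off (splitBlock F1 F2 j) 2 := by
    intro j hj
    rcases mem_union.1 (hunion ▸ hj) with h | h
    · rw [splitBlock_of_mem_left h]
      exact splitOffset_flow_left (hi1max j h) (hpq j hj).le
    · rw [splitBlock_of_mem_right hdisj h]
      exact splitOffset_flow_right hp1 (hi2max j h) (hpq j hj).le
  have hopen : ∀ j ∈ ({jn} : Finset J), j ∉ F → ∀ i i', i ≠ i' →
      off (splitBlock F1 F2 j) i + q j ≤ off (splitBlock F1 F2 j) i' ∨
        off (splitBlock F1 F2 j) i' + q j ≤ off (splitBlock F1 F2 j) i := by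
    intro j hj _
    rw [mem_singleton.1 hj, splitBlock_of_notMem hjn1 hjn2]
    exact separated_of_chain hq (Or.inr splitOffset_one_chain)
  obtain ⟨h32, h21, hbefore, hafter⟩ :=
    blockSchedule_splitBlock_order (i1 := i1) (i2 := i2) hjn hF1 hF2 hdisj ht
  refine ⟨blockSchedule (splitBlock F1 F2) off t, ?_, h32, h21, hbefore, hafter,
    makespan_le_of_blocks ⟨jn, by simp⟩ hgrp ht (splitOffset_add_splitWidth_le hp1 hp2 hq hP1 hP2)⟩
  exact Feasible.of_blocks hp0 hgrp ht_in ht (splitOffset_nonneg hp1 hp2 hq hP1)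
    (fun i _ _ => splitOffset_separated hp1 hp2 hq hP1 i) hflow hopen

end SingleOpenJob

theorem stmt17_general {J : Type*} [DecidableEq J] (F : Finset J) (jn : J) (p q : J → ℝ)
    (hdisj : Disjoint F {jn})
    (hp : ∀ j ∈ F, 0 < p j)
    (hpq : ∀ j ∈ F, p j < q jn)
    (F1 F2 : Finset J) (hunion : F1 ∪ F2 = F) (hdisj12 : Disjoint F1 F2)
    (i1 : J) (hi1 : i1 ∈ F1) (hi1max : ∀ j ∈ F1, p j ≤ p i1)
    (i2 : J) (hi2 : i2 ∈ F2) (hi2max : ∀ j ∈ F2, p j ≤ p i2) :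
    (∀ S : J → Fin 3 → ℝ, Feasible F {jn} p q S →
        S jn 2 + q jn ≤ S jn 1 → S jn 1 + q jn ≤ S jn 0 →
        (∀ j ∈ F1, S j 1 + p j ≤ S jn 1) → (∀ j ∈ F2, S jn 1 + q jn ≤ S j 1) →
        max (p i1 + ∑ j ∈ F1, p j) (q jn) + q jn + max (p i2 + ∑ j ∈ F2, p j) (q jn)
          ≤ makespan F {jn} p q S) ∧
    (∃ S : J → Fin 3 → ℝ, Feasible F {jn} p q S ∧
        S jn 2 + q jn ≤ S jn 1 ∧ S jn 1 + q jn ≤ S jn 0 ∧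
        (∀ j ∈ F1, S j 1 + p j ≤ S jn 1) ∧ (∀ j ∈ F2, S jn 1 + q jn ≤ S j 1) ∧
        makespan F {jn} p q S =
          max (p i1 + ∑ j ∈ F1, p j) (q jn) + q jn
            + max (p i2 + ∑ j ∈ F2, p j) (q jn)) := by
  have hjn : jn ∉ F := disjoint_singleton_right.1 hdisj
  have hF1 : F1 ⊆ F := hunion ▸ subset_union_left
  have hF2 : F2 ⊆ F := hunion ▸ subset_union_right
  have hlower := fun (S : J → Fin 3 → ℝ) =>
    le_makespan_of_split (q := q) (S := S) hjn hp hF1 hF2 hi1 hi2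
  obtain ⟨S, hS, h32, h21, hbefore, hafter, hle⟩ :=
    exists_split_schedule hjn hp hpq hunion hdisj12 hi1 hi1max hi2 hi2max
  exact ⟨hlower, S, hS, h32, h21, hbefore, hafter,
    hle.antisymm (hlower S hS h32 h21 hbefore hafter)⟩

/-- Lemma 6.4: suppose `O = {jn}` with `q_n > p_max` and `{F1, F2}` is a bipartition of
`F` with both parts nonempty, whose largest jobs are `i1` and `i2` respectively. Among
the feasible schedules in which `jn` is processed in machine order `⟨M3, M2, M1⟩`
(i.e. `C_n^3 ≤ S_n^2` and `C_n^2 ≤ S_n^1`), every job of `F1` is completed on `M2` by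
time `S_n^2`, and every job of `F2` starts on `M2` no earlier than `C_n^2`, every one
has makespan at least `max {p_{i1} + P(F1), q_n} + q_n + max {p_{i2} + P(F2), q_n}` and
one attains exactly this value. Machines `M1, M2, M3` are `0, 1, 2`. -/
theorem stmt17 {J : Type*} [DecidableEq J] (F : Finset J) (jn : J) (p q : J → ℝ)
    (hdisj : Disjoint F {jn})
    (hp : ∀ j ∈ F, 0 < p j) (hq : 0 < q jn)
    (hpq : ∀ j ∈ F, p j < q jn)
    (F1 F2 : Finset J) (hunion : F1 ∪ F2 = F) (hdisj12 : Disjoint F1 F2)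
    (hF1 : F1.Nonempty) (hF2 : F2.Nonempty)
    (i1 : J) (hi1 : i1 ∈ F1) (hi1max : ∀ j ∈ F1, p j ≤ p i1)
    (i2 : J) (hi2 : i2 ∈ F2) (hi2max : ∀ j ∈ F2, p j ≤ p i2) :
    (∀ S : J → Fin 3 → ℝ, Feasible F {jn} p q S →
        S jn 2 + q jn ≤ S jn 1 → S jn 1 + q jn ≤ S jn 0 →
        (∀ j ∈ F1, S j 1 + p j ≤ S jn 1) → (∀ j ∈ F2, S jn 1 + q jn ≤ S j 1) →
        max (p i1 + ∑ j ∈ F1, p j) (q jn) + q jn + max (p i2 + ∑ j ∈ F2, p j) (q jn)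
          ≤ makespan F {jn} p q S) ∧
    (∃ S : J → Fin 3 → ℝ, Feasible F {jn} p q S ∧
        S jn 2 + q jn ≤ S jn 1 ∧ S jn 1 + q jn ≤ S jn 0 ∧
        (∀ j ∈ F1, S j 1 + p j ≤ S jn 1) ∧ (∀ j ∈ F2, S jn 1 + q jn ≤ S j 1) ∧
        makespan F {jn} p q S =
          max (p i1 + ∑ j ∈ F1, p j) (q jn) + q jn
            + max (p i2 + ∑ j ∈ F2, p j) (q jn)) :=
  stmt17_general F jn p q hdisj hp hpq F1 F2 hunion hdisj12 i1 hi1 hi1max i2 hi2 hi2max
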